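/- arXiv:2302.02229 — 7 statements merged into one kernel-verified Lean document; each statement's English description precedes it below -/
import Mathlib

section
/- For all positive integers m: ∑_{i=1}^m H_{m+i}/i = H_m² + (1/2)·H²_m, where H_n = ∑_{k=1}^n 1/k and H²_n = ∑_{k=1}^n 1/k². -/
open Finset

noncomputable def H (n : ℕ) : ℝ := ∑ k ∈ Finset.range n, 1 / ((k : ℝ) + 1)
noncomputable def H2 (n : ℕ) : ℝ := ∑ k ∈ Finset.range n, 1 / ((k : ℝ) + 1) ^ 2

/-! Writing `S m` for the left-hand side, `H (m + 1 + i) - H (m + i) = 1 / (m + 1 + i)` and partial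
fractions `1 / (i (m + 1 + i)) = (1 / i - 1 / (m + 1 + i)) / (m + 1)` give
`S (m + 1) - S m = (H m + H (m + 1) + 1 / (2 (m + 1))) / (m + 1)`, which is also the increment
`H (m + 1) ^ 2 - H m ^ 2 + H2 (m + 1) / 2 - H2 m / 2` of the right-hand side. -/

lemma H_succ (n : ℕ) : H (n + 1) = H n + 1 / ((n : ℝ) + 1) := by
  simp [H, sum_range_succ]

lemma H2_succ (n : ℕ) : H2 (n + 1) = H2 n + 1 / ((n : ℝ) + 1) ^ 2 := by
  simp [H2, sum_range_succ]

lemma sum_Icc_one_div_add (c m : ℕ) :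
    ∑ i ∈ Icc 1 m, 1 / ((c : ℝ) + i) = H (c + m) - H c := by
  induction m with
  | zero => simp
  | succ m ih =>
    rw [sum_Icc_succ_top (by omega), ih, ← add_assoc, H_succ]
    push_cast
    ring

lemma sum_Icc_one_div (m : ℕ) : ∑ i ∈ Icc 1 m, 1 / (i : ℝ) = H m := by
  simpa [H] using sum_Icc_one_div_add 0 m

lemma sum_Icc_one_div_mul_add (c m : ℕ) (hc : 0 < c) :
    ∑ i ∈ Icc 1 m, 1 / ((i : ℝ) * (c + i)) = (H m - (H (c + m) - H c)) / c := by
  have hc : (c : ℝ) ≠ 0 := by positivity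
  have partial_fractions : ∀ i ∈ Icc 1 m,
      1 / ((i : ℝ) * (c + i)) = (1 / (i : ℝ) - 1 / ((c : ℝ) + i)) / c := by
    intro i hi
    have hi : (i : ℝ) ≠ 0 := by have := (mem_Icc.mp hi).1; positivity
    field_simp
    ring
  rw [sum_congr rfl partial_fractions, ← sum_div, sum_sub_distrib, sum_Icc_one_div,
    sum_Icc_one_div_add]

lemma sum_Icc_H_add_div_succ (m : ℕ) :
    ∑ i ∈ Icc 1 (m + 1), H (m + 1 + i) / (i : ℝ) =
      ∑ i ∈ Icc 1 m, H (m + i) / (i : ℝ) + (H m + H (m + 1) + 1 / (2 * ((m : ℝ) + 1))) / (m + 1) := by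
  have increment : ∀ i ∈ Icc 1 m,
      H (m + 1 + i) / (i : ℝ) = H (m + i) / i + 1 / ((i : ℝ) * ((m + 1 : ℕ) + i)) := by
    intro i hi
    have hi : (i : ℝ) ≠ 0 := by have := (mem_Icc.mp hi).1; positivity
    rw [show m + 1 + i = m + i + 1 by omega, H_succ]
    push_cast
    field_simp
    ring
  have hm : ((m : ℝ) + 1) ≠ 0 := by positivity
  rw [sum_Icc_succ_top (by omega), sum_congr rfl increment, sum_add_distrib,
    sum_Icc_one_div_mul_add _ _ m.succ_pos, show m + 1 + (m + 1) = m + 1 + m + 1 by omega,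
    H_succ (m + 1 + m)]
  push_cast
  field_simp
  ring

theorem stmt4_general (m : ℕ) :
    ∑ i ∈ Finset.Icc 1 m, H (m + i) / (i : ℝ) = (H m) ^ 2 + (1 / 2) * H2 m := by
  induction m with
  | zero => simp [H, H2]
  | succ m ih =>
    have hm : ((m : ℝ) + 1) ≠ 0 := by positivity
    rw [sum_Icc_H_add_div_succ, ih, H_succ, H2_succ]
    field_simp
    ring

theorem stmt4 (m : ℕ) (hm : 0 < m) :
    ∑ i ∈ Finset.Icc 1 m, H (m + i) / (i : ℝ) = (H m) ^ 2 + (1 / 2) * H2 m :=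
  stmt4_general m
end

section
/- For all positive integers m and nonnegative integers a, b with a ≠ b: ∑_{i=1}^m H_{i+a-1}·H_{i+b-1} = (b−a)·∑_{i=1}^{m-1} H_{a+i-1}/(b+i) + (m+a)·H_{m+a-1}·H_{m+b-1} − a·H_a·H_b − (m+a−1)·H_{m+a-1} + a·H_a − (m+b)·H_{m+b-1} + (b+1)·H_b + 2m − 2, where H_n = ∑_{k=1}^n 1/k. -/
open Finset

lemma sum_Icc_one_eq_sum_range {M : Type*} [AddCommMonoid M] (f : ℕ → M) (m : ℕ) :
    ∑ i ∈ Icc 1 m, f i = ∑ i ∈ range m, f (i + 1) := by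
  rw [← Ico_add_one_right_eq_Icc, sum_Ico_eq_sum_range]
  simp [add_comm]

lemma sum_range_H_mul_H (a b n : ℕ) :
    ∑ i ∈ range (n + 1), H (a + i) * H (b + i)
      = ((b : ℝ) - a) * ∑ i ∈ range n, H (a + i) / ((b : ℝ) + i + 1)
        + ((n : ℝ) + 1 + a) * H (a + n) * H (b + n)
        - a * H a * H b
        - ((n : ℝ) + a) * H (a + n)
        + a * H a
        - ((n : ℝ) + 1 + b) * H (b + n)
        + ((b : ℝ) + 1) * H b
        + 2 * n := by
  induction n with
  | zero => simp only [zero_add, sum_range_one, range_zero, sum_empty, add_zero]; push_cast; ring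
  | succ n ih =>
    rw [sum_range_succ, ih, sum_range_succ, ← add_assoc a, ← add_assoc b, H_succ (a + n),
      H_succ (b + n)]
    have ha : (a : ℝ) + n + 1 ≠ 0 := by positivity
    have hb : (b : ℝ) + n + 1 ≠ 0 := by positivity
    push_cast
    field_simp
    ring

theorem stmt5_general (m a b : ℕ) (hm : 0 < m) :
    ∑ i ∈ Finset.Icc 1 m, H (i + a - 1) * H (i + b - 1)
      = ((b : ℝ) - a) * ∑ i ∈ Finset.Icc 1 (m - 1), H (a + i - 1) / ((b : ℝ) + i)
        + ((m : ℝ) + a) * H (m + a - 1) * H (m + b - 1)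
        - (a : ℝ) * H a * H b
        - ((m : ℝ) + a - 1) * H (m + a - 1)
        + (a : ℝ) * H a
        - ((m : ℝ) + b) * H (m + b - 1)
        + ((b : ℝ) + 1) * H b
        + 2 * (m : ℝ) - 2 := by
  obtain ⟨n, rfl⟩ : ∃ n, m = n + 1 := Nat.exists_eq_add_one.mpr hm
  have shift (c i : ℕ) : i + 1 + c - 1 = c + i := by omega
  have shift' (c i : ℕ) : c + (i + 1) - 1 = c + i := by omega
  rw [Nat.add_sub_cancel]
  simp only [sum_Icc_one_eq_sum_range, shift, shift']
  rw [sum_range_H_mul_H]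
  push_cast
  simp only [← add_assoc]
  ring

theorem stmt5 (m a b : ℕ) (hm : 0 < m) (hab : a ≠ b) :
    ∑ i ∈ Finset.Icc 1 m, H (i + a - 1) * H (i + b - 1)
      = ((b : ℝ) - a) * ∑ i ∈ Finset.Icc 1 (m - 1), H (a + i - 1) / ((b : ℝ) + i)
        + ((m : ℝ) + a) * H (m + a - 1) * H (m + b - 1)
        - (a : ℝ) * H a * H b
        - ((m : ℝ) + a - 1) * H (m + a - 1)
        + (a : ℝ) * H a
        - ((m : ℝ) + b) * H (m + b - 1)
        + ((b : ℝ) + 1) * H b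
        + 2 * (m : ℝ) - 2 :=
  stmt5_general m a b hm
end

section
/- For all positive integers m and nonnegative integers a, b with a ≠ b: ∑_{i=1}^m H_{i+b-1}/(i+a) + ∑_{i=1}^m H_{i+a-1}/(i+b) = H_{m+a}·H_{m+b} − H_a·H_b + (H_{m+a} − H_{m+b} − H_a + H_b)/(a−b), where H_n = ∑_{k=1}^n 1/k. -/
open Finset

lemma one_div_mul_one_div_eq_sub_div {K : Type*} [Field K] {x a b : K}
    (ha : x + a ≠ 0) (hb : x + b ≠ 0) (hab : a - b ≠ 0) :
    1 / (x + a) * (1 / (x + b)) = (1 / (x + b) - 1 / (x + a)) / (a - b) := by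
  field_simp
  ring

theorem stmt6_general (m a b : ℕ) (hab : a ≠ b) :
    (∑ i ∈ Finset.Icc 1 m, H (i + b - 1) / ((i : ℝ) + a))
      + (∑ i ∈ Finset.Icc 1 m, H (i + a - 1) / ((i : ℝ) + b))
      = H (m + a) * H (m + b) - H a * H b
        + (H (m + a) - H (m + b) - H a + H b) / ((a : ℝ) - b) := by
  have hab' : (a : ℝ) - b ≠ 0 := sub_ne_zero.mpr (Nat.cast_injective.ne hab)
  induction m with
  | zero => simp
  | succ m ih =>
    rw [sum_Icc_succ_top (by omega), sum_Icc_succ_top (by omega), add_add_add_comm, ih,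
      Nat.add_right_comm, Nat.add_sub_cancel, Nat.add_right_comm m 1 a, Nat.add_sub_cancel,
      H_succ, H_succ]
    have partial_fractions := one_div_mul_one_div_eq_sub_div (x := (m : ℝ) + 1) (a := (a : ℝ))
      (b := b) (by positivity) (by positivity) hab'
    push_cast
    linear_combination -partial_fractions

theorem stmt6 (m a b : ℕ) (hm : 0 < m) (hab : a ≠ b) :
    (∑ i ∈ Finset.Icc 1 m, H (i + b - 1) / ((i : ℝ) + a))
      + (∑ i ∈ Finset.Icc 1 m, H (i + a - 1) / ((i : ℝ) + b))
      = H (m + a) * H (m + b) - H a * H b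
        + (H (m + a) - H (m + b) - H a + H b) / ((a : ℝ) - b) :=
  stmt6_general m a b hab
end

section
/- For positive integers m ≤ n: ∑_{i=1}^m (n−i)!/((m−i)!·i) = (n!/m!)·(H_n − H_{n−m}), where H_k = ∑_{j=1}^k 1/j. -/
/-! Dividing by `(n - m)!` and writing `k = n - m`, the identity becomes
`∑ i ∈ [1, m], C(m + k - i, k) / i = C(m + k, k) (H (m + k) - H k)`. Both sides vanish for `m = 0`,
equal `H m` for `k = 0`, and satisfy the Pascal recurrence `F (m+1) (k+1) = F m (k+1) + F (m+1) k`: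
the left side termwise by Pascal's rule, the right side because `C(N+1, k+1) / (N+1) = C(N, k) / (k+1)`. -/

open Finset

lemma H_eq_sum_Icc (n : ℕ) : H n = ∑ i ∈ Icc 1 n, 1 / (i : ℝ) := by
  induction n with
  | zero => simp [H]
  | succ n ih => rw [H_succ, ih, sum_Icc_succ_top (by omega)]; push_cast; rfl

lemma choose_mul_H_succ_succ (N k : ℕ) :
    ((N + 1).choose (k + 1) : ℝ) * (H (N + 1) - H (k + 1))
      = (N.choose (k + 1) : ℝ) * (H N - H (k + 1)) + (N.choose k : ℝ) * (H N - H k) := by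
  have hpascal : ((N + 1).choose (k + 1) : ℝ) = N.choose k + N.choose (k + 1) := by
    exact_mod_cast Nat.choose_succ_succ' N k
  have habsorb : ((N + 1).choose (k + 1) : ℝ) / ((N : ℝ) + 1) = N.choose k / ((k : ℝ) + 1) := by
    rw [div_eq_div_iff (by positivity) (by positivity)]
    exact_mod_cast (Nat.add_one_mul_choose_eq N k).symm.trans (mul_comm _ _)
  rw [H_succ N, H_succ k]
  linear_combination habsorb + (H N - H k - 1 / ((k : ℝ) + 1)) * hpascal

noncomputable def harmonicChooseSum (m k : ℕ) : ℝ :=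
  ∑ i ∈ Icc 1 m, ((m + k - i).choose k : ℝ) / i

lemma harmonicChooseSum_zero_left (k : ℕ) : harmonicChooseSum 0 k = 0 := by
  simp [harmonicChooseSum]

lemma harmonicChooseSum_zero_right (m : ℕ) : harmonicChooseSum m 0 = H m := by
  simp [harmonicChooseSum, H_eq_sum_Icc]

lemma harmonicChooseSum_succ_succ (m k : ℕ) :
    harmonicChooseSum (m + 1) (k + 1) = harmonicChooseSum m (k + 1) + harmonicChooseSum (m + 1) k := by
  have hpascal : ∀ i ∈ Icc 1 (m + 1),
      ((m + 1 + (k + 1) - i).choose (k + 1) : ℝ) / i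
        = ((m + (k + 1) - i).choose (k + 1) : ℝ) / i + ((m + 1 + k - i).choose k : ℝ) / i := by
    intro i hi
    have hi : i ≤ m + 1 := (mem_Icc.mp hi).2
    rw [show m + 1 + (k + 1) - i = (m + k + 1 - i) + 1 by omega, Nat.choose_succ_succ',
      show m + (k + 1) - i = m + k + 1 - i by omega, show m + 1 + k - i = m + k + 1 - i by omega]
    push_cast
    ring
  have htop : ((m + (k + 1) - (m + 1)).choose (k + 1) : ℝ) = 0 := by
    rw [show m + (k + 1) - (m + 1) = k by omega, Nat.choose_succ_self, Nat.cast_zero]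
  rw [harmonicChooseSum, sum_congr rfl hpascal, sum_add_distrib, sum_Icc_succ_top (by omega)
    (fun i => ((m + (k + 1) - i).choose (k + 1) : ℝ) / i), htop, zero_div, add_zero]
  rfl

theorem harmonicChooseSum_eq (m k : ℕ) :
    harmonicChooseSum m k = (m + k).choose k * (H (m + k) - H k) := by
  induction m generalizing k with
  | zero => simp [harmonicChooseSum_zero_left]
  | succ m ihm =>
    induction k with
    | zero => simp [harmonicChooseSum_zero_right, H]
    | succ k ihk =>
      rw [harmonicChooseSum_succ_succ, ihm, ihk, show m + 1 + (k + 1) = (m + k + 1) + 1 by ring,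
        choose_mul_H_succ_succ]
      ring_nf

lemma factorial_sub_div_factorial_sub {a b c : ℕ} (hba : b ≤ a) (hcb : c ≤ b) :
    ((a - c).factorial : ℝ) / (b - c).factorial = (a - b).factorial * (a - c).choose (a - b) := by
  rw [div_eq_iff (by positivity)]
  have h := Nat.choose_mul_factorial_mul_factorial (show a - b ≤ a - c by omega)
  rw [show a - c - (a - b) = b - c by omega] at h
  rw [← h]
  push_cast
  ring

theorem stmt8_general (m n : ℕ) (hmn : m ≤ n) :
    ∑ i ∈ Finset.Icc 1 m, ((Nat.factorial (n - i)) : ℝ) / (((Nat.factorial (m - i)) : ℝ) * (i : ℝ))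
      = (((Nat.factorial n) : ℝ) / ((Nat.factorial m) : ℝ)) * (H n - H (n - m)) := by
  obtain ⟨k, rfl⟩ := Nat.exists_eq_add_of_le hmn
  have hterm : ∀ i ∈ Icc 1 m, ((m + k - i).factorial : ℝ) / ((m - i).factorial * i)
      = k.factorial * (((m + k - i).choose k : ℝ) / i) := by
    intro i hi
    rw [← div_div, factorial_sub_div_factorial_sub (by omega) (mem_Icc.mp hi).2,
      Nat.add_sub_cancel_left]
    ring
  have hfront : ((m + k).factorial : ℝ) / m.factorial = k.factorial * (m + k).choose k := by
    simpa using factorial_sub_div_factorial_sub (a := m + k) (by omega) (Nat.zero_le m)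
  rw [sum_congr rfl hterm, ← mul_sum, ← harmonicChooseSum, harmonicChooseSum_eq, hfront,
    Nat.add_sub_cancel_left]
  ring

theorem stmt8 (m n : ℕ) (hm : 0 < m) (hmn : m ≤ n) :
    ∑ i ∈ Finset.Icc 1 m, ((Nat.factorial (n - i)) : ℝ) / (((Nat.factorial (m - i)) : ℝ) * (i : ℝ))
      = (((Nat.factorial n) : ℝ) / ((Nat.factorial m) : ℝ)) * (H n - H (n - m)) :=
  stmt8_general m n hmn
end

section
/- For all positive integers m, a, b, c: ∑_{i=1}^m 1/((c+i−1)!·(a+i−1)!·(m−i)!·(m+b−i)!) = (1/((m+b−1)!·(m+a+b−1)!·(c−1)!·(m+c−1)!))·∑_{i=1}^m (m+a+b+i−2)!·(m+c−i−1)!/((a+i−1)!·(m−i)!). -/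
/-!
Each reciprocal product of factorials on the left is
`C(P, r - t) C(L + s, s + 1 + t) / (P! (L + s)!)` and each ratio on the right is
`C(P + t, r) C(L + s - 1 - t, s) r! s!`, where `P = m + a + b - 1`, `r = m + b - 1`, `L = m`,
`s = c - 1` and `t = i - 1`. The resulting binomial identity holds because both sides count the
`(r + s + 1)`-subsets of `{0, …, P + L + s - 1}` with at most `r` elements below `P`: the right
side by the position `P + t` of the `(r + 1)`-st element, the left side by the number `r - t` of
elements below `P`.
-/

open Finset
open scoped Nat

theorem sum_range_succ_choose_succ_mul (P n : ℕ) (f : ℕ → ℕ) :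
    ∑ j ∈ range (n + 1), (P + 1).choose j * f j =
      ∑ j ∈ range (n + 1), P.choose j * f j + ∑ j ∈ range n, P.choose j * f (j + 1) := by
  rw [sum_range_succ', sum_range_succ' (fun j => P.choose j * f j)]
  simp only [Nat.choose_succ_succ', add_mul, sum_add_distrib, Nat.choose_zero_right]
  ring

theorem sum_range_choose_add_mul_choose (P R r s : ℕ) :
    ∑ p ∈ range R, (P + p).choose r * (R - 1 - p).choose s =
      ∑ j ∈ range (r + 1), P.choose j * R.choose (r + s + 1 - j) := by
  induction R generalizing P with
  | zero =>
    refine (sum_eq_zero fun j hj => ?_).symm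
    have : 0 < r + s + 1 - j := by simp only [mem_range] at hj; omega
    rw [Nat.choose_eq_zero_of_lt this, mul_zero]
  | succ R ih =>
    have pascal : ∀ j ∈ range (r + 1), P.choose j * (R + 1).choose (r + s + 1 - j) =
        P.choose j * R.choose (r + s + 1 - j) + P.choose j * R.choose (r + s - j) := by
      intro j hj
      have hjr := mem_range.1 hj
      rw [show r + s + 1 - j = r + s - j + 1 by omega, Nat.choose_succ_succ', mul_add, add_comm]
    calc ∑ p ∈ range (R + 1), (P + p).choose r * (R + 1 - 1 - p).choose s
        = ∑ p ∈ range R, (P + 1 + p).choose r * (R - 1 - p).choose s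
            + P.choose r * R.choose s := by
          rw [sum_range_succ']
          congr 1
          exact sum_congr rfl fun p _ => by rw [add_assoc, add_comm 1 p]; congr 2; omega
      _ = ∑ j ∈ range (r + 1), (P + 1).choose j * R.choose (r + s + 1 - j)
            + P.choose r * R.choose s := by rw [ih]
      _ = ∑ j ∈ range (r + 1), P.choose j * (R + 1).choose (r + s + 1 - j) := by
          rw [sum_range_succ_choose_succ_mul, sum_congr rfl pascal, sum_add_distrib,
            sum_range_succ (fun j => P.choose j * R.choose (r + s - j))]
          simp only [Nat.add_sub_add_right, Nat.add_sub_cancel_left]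
          ring

theorem sum_range_choose_sub_mul_choose (P r s L : ℕ) (hL : L ≤ r + 1) :
    ∑ t ∈ range L, P.choose (r - t) * (L + s).choose (s + 1 + t) =
      ∑ t ∈ range L, (P + t).choose r * (L + s - 1 - t).choose s := by
  calc ∑ t ∈ range L, P.choose (r - t) * (L + s).choose (s + 1 + t)
      = ∑ t ∈ range (r + 1), P.choose (r - t) * (L + s).choose (s + 1 + t) := by
        refine sum_subset (range_subset_range.2 hL) fun t _ ht =>
          mul_eq_zero_of_right _ (Nat.choose_eq_zero_of_lt ?_)
        simp only [mem_range] at ht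
        omega
    _ = ∑ j ∈ range (r + 1), P.choose j * (L + s).choose (r + s + 1 - j) := by
        rw [← sum_range_reflect]
        refine sum_congr rfl fun t ht => ?_
        simp only [mem_range] at ht
        congr 2 <;> omega
    _ = ∑ t ∈ range (L + s), (P + t).choose r * (L + s - 1 - t).choose s :=
        (sum_range_choose_add_mul_choose P (L + s) r s).symm
    _ = ∑ t ∈ range L, (P + t).choose r * (L + s - 1 - t).choose s := by
        refine (sum_subset (range_subset_range.2 (Nat.le_add_right L s)) fun t ht' ht =>
          mul_eq_zero_of_right _ (Nat.choose_eq_zero_of_lt ?_)).symm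
        simp only [mem_range] at ht ht'
        omega

theorem sum_Icc_choose_mul_choose (m a b c : ℕ) (hc : 0 < c) :
    ∑ i ∈ Icc 1 m, (m + a + b - 1).choose (m + b - i) * (m + c - 1).choose (c + i - 1) =
      ∑ i ∈ Icc 1 m,
        (m + a + b + i - 2).choose (m + b - 1) * (m + c - i - 1).choose (c - 1) := by
  rw [← Ico_add_one_right_eq_Icc, sum_Ico_eq_sum_range, sum_Ico_eq_sum_range,
    Nat.add_sub_cancel]
  convert sum_range_choose_sub_mul_choose (m + a + b - 1) (m + b - 1) (c - 1) m (by omega)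
    using 1 <;> refine sum_congr rfl fun t ht => ?_ <;> simp only [mem_range] at ht <;>
    congr 2 <;> omega

section Factorial

variable {K : Type*} [Field K] [CharZero K] {n k l : ℕ}

theorem one_div_factorial_mul_factorial_eq_choose_div (h : k + l = n) :
    1 / ((k ! : K) * l !) = n.choose k / n ! := by
  subst h
  have hk : (k ! : K) ≠ 0 := Nat.cast_ne_zero.2 k.factorial_ne_zero
  have hl : (l ! : K) ≠ 0 := Nat.cast_ne_zero.2 l.factorial_ne_zero
  have hkl : ((k + l)! : K) ≠ 0 := Nat.cast_ne_zero.2 (k + l).factorial_ne_zero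
  rw [Nat.cast_add_choose]
  field_simp

theorem factorial_div_factorial_eq_choose_mul (h : k + l = n) :
    (n ! : K) / l ! = n.choose k * k ! := by
  subst h
  have hk : (k ! : K) ≠ 0 := Nat.cast_ne_zero.2 k.factorial_ne_zero
  have hl : (l ! : K) ≠ 0 := Nat.cast_ne_zero.2 l.factorial_ne_zero
  rw [Nat.cast_add_choose]
  field_simp

end Factorial

theorem stmt13_general (m a b c : ℕ) (hc : 0 < c) :
    ∑ i ∈ Finset.Icc 1 m,
        1 / (((Nat.factorial (c + i - 1)) : ℝ) * ((Nat.factorial (a + i - 1)) : ℝ) * ((Nat.factorial (m - i)) : ℝ)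
              * ((Nat.factorial (m + b - i)) : ℝ))
      = (1 / (((Nat.factorial (m + b - 1)) : ℝ) * ((Nat.factorial (m + a + b - 1)) : ℝ) * ((Nat.factorial (c - 1)) : ℝ)
              * ((Nat.factorial (m + c - 1)) : ℝ)))
        * ∑ i ∈ Finset.Icc 1 m,
            ((Nat.factorial (m + a + b + i - 2)) : ℝ) * ((Nat.factorial (m + c - i - 1)) : ℝ)
              / (((Nat.factorial (a + i - 1)) : ℝ) * ((Nat.factorial (m - i)) : ℝ)) := by
  have lhs_term : ∀ i ∈ Icc 1 m,
      1 / (((c + i - 1)! : ℝ) * (a + i - 1)! * (m - i)! * (m + b - i)!) =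
      (((m + a + b - 1).choose (m + b - i) * (m + c - 1).choose (c + i - 1) : ℕ) : ℝ) /
        ((m + a + b - 1)! * (m + c - 1)!) := by
    intro i hi
    simp only [mem_Icc] at hi
    rw [Nat.cast_mul, mul_div_mul_comm,
      ← one_div_factorial_mul_factorial_eq_choose_div (k := m + b - i) (l := a + i - 1)
        (by omega),
      ← one_div_factorial_mul_factorial_eq_choose_div (k := c + i - 1) (l := m - i) (by omega)]
    field_simp
  have rhs_term : ∀ i ∈ Icc 1 m,
      ((m + a + b + i - 2)! : ℝ) * (m + c - i - 1)! / ((a + i - 1)! * (m - i)!) =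
        (((m + a + b + i - 2).choose (m + b - 1) * (m + c - i - 1).choose (c - 1) : ℕ) : ℝ) *
          ((m + b - 1)! * (c - 1)!) := by
    intro i hi
    simp only [mem_Icc] at hi
    rw [mul_div_mul_comm,
      factorial_div_factorial_eq_choose_mul (k := m + b - 1) (l := a + i - 1) (by omega),
      factorial_div_factorial_eq_choose_mul (k := c - 1) (l := m - i) (by omega)]
    push_cast
    ring
  rw [sum_congr rfl lhs_term, sum_congr rfl rhs_term, ← sum_div, ← sum_mul, ← Nat.cast_sum,
    ← Nat.cast_sum, sum_Icc_choose_mul_choose m a b c hc]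
  field_simp

theorem stmt13 (m a b c : ℕ) (hm : 0 < m) (ha : 0 < a) (hb : 0 < b) (hc : 0 < c) :
    ∑ i ∈ Finset.Icc 1 m,
        1 / (((Nat.factorial (c + i - 1)) : ℝ) * ((Nat.factorial (a + i - 1)) : ℝ) * ((Nat.factorial (m - i)) : ℝ)
              * ((Nat.factorial (m + b - i)) : ℝ))
      = (1 / (((Nat.factorial (m + b - 1)) : ℝ) * ((Nat.factorial (m + a + b - 1)) : ℝ) * ((Nat.factorial (c - 1)) : ℝ)
              * ((Nat.factorial (m + c - 1)) : ℝ)))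
        * ∑ i ∈ Finset.Icc 1 m,
            ((Nat.factorial (m + a + b + i - 2)) : ℝ) * ((Nat.factorial (m + c - i - 1)) : ℝ)
              / (((Nat.factorial (a + i - 1)) : ℝ) * ((Nat.factorial (m - i)) : ℝ)) :=
  stmt13_general m a b c hc
end

section
/- For all positive integers m and positive integers a, b: ∑_{i=1}^m 1/((i−1)!·(a+i−1)!·(m−i)!·(m+b−i)!) = (a+b+2m−2)! / ((m−1)!·(a+m−1)!·(b+m−1)!·(a+b+m−1)!). -/
/-!
Put `n = m - 1` and `i = j + 1`. Each summand is then
`n.choose j * (n + a + b).choose (a + j) / (n! * (n + a + b)!)`, and by Vandermonde's identity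
the binomial products sum to `(2n + a + b).choose (a + n)`, which is the right-hand side times
`n! * (n + a + b)!`.
-/

open Finset Nat

theorem Nat.sum_range_choose_mul_choose_add (n N a : ℕ) :
    ∑ j ∈ range (n + 1), n.choose j * N.choose (a + j) = (n + N).choose (a + n) := by
  rw [add_choose_eq, Finset.Nat.sum_antidiagonal_eq_sum_range_succ_mk, ← sum_range_reflect]
  refine sum_subset_zero_on_sdiff (range_subset_range.2 (by omega)) ?_ fun j hj ↦ ?_
  · intro p hp
    simp only [mem_sdiff, mem_range] at hp
    rw [choose_eq_zero_of_lt (by omega), zero_mul]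
  · rw [mem_range] at hj
    rw [add_tsub_cancel_right, choose_symm (by omega), show a + (n - j) = a + n - j by omega]

theorem stmt16_general (m a b : ℕ) (hm : 0 < m) :
    ∑ i ∈ Finset.Icc 1 m,
        1 / (((Nat.factorial (i - 1)) : ℝ) * ((Nat.factorial (a + i - 1)) : ℝ) * ((Nat.factorial (m - i)) : ℝ)
              * ((Nat.factorial (m + b - i)) : ℝ))
      = ((Nat.factorial (a + b + 2 * m - 2)) : ℝ)
        / (((Nat.factorial (m - 1)) : ℝ) * ((Nat.factorial (a + m - 1)) : ℝ) * ((Nat.factorial (b + m - 1)) : ℝ)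
            * ((Nat.factorial (a + b + m - 1)) : ℝ)) := by
  obtain ⟨n, rfl⟩ : ∃ n, m = n + 1 := ⟨m - 1, by omega⟩
  have hterm : ∀ j ∈ range (n + 1),
      1 / (((1 + j - 1)! : ℝ) * (a + (1 + j) - 1)! * (n + 1 - (1 + j))! * (n + 1 + b - (1 + j))!)
        = (n.choose j * (n + a + b).choose (a + j) : ℕ) / ((n ! : ℝ) * (n + a + b)!) := by
    intro j hj
    obtain ⟨l, rfl⟩ := exists_add_of_le (mem_range_succ_iff.1 hj)
    rw [show 1 + j - 1 = j by omega, show a + (1 + j) - 1 = a + j by omega,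
      show j + l + 1 - (1 + j) = l by omega, show j + l + 1 + b - (1 + j) = b + l by omega,
      show j + l + a + b = a + j + (b + l) by omega]
    push_cast [cast_add_choose]
    field_simp
  rw [← Ico_add_one_right_eq_Icc, sum_Ico_eq_sum_range, add_tsub_cancel_right,
    sum_congr rfl hterm, ← sum_div, ← Nat.cast_sum, sum_range_choose_mul_choose_add,
    show n + (n + a + b) = a + n + (b + n) by omega, cast_add_choose]
  rw [show a + b + 2 * (n + 1) - 2 = a + n + (b + n) by omega, add_tsub_cancel_right,
    show a + (n + 1) - 1 = a + n by omega, show b + (n + 1) - 1 = b + n by omega,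
    show a + b + (n + 1) - 1 = n + a + b by omega]
  field_simp

theorem stmt16 (m a b : ℕ) (hm : 0 < m) (ha : 0 < a) (hb : 0 < b) :
    ∑ i ∈ Finset.Icc 1 m,
        1 / (((Nat.factorial (i - 1)) : ℝ) * ((Nat.factorial (a + i - 1)) : ℝ) * ((Nat.factorial (m - i)) : ℝ)
              * ((Nat.factorial (m + b - i)) : ℝ))
      = ((Nat.factorial (a + b + 2 * m - 2)) : ℝ)
        / (((Nat.factorial (m - 1)) : ℝ) * ((Nat.factorial (a + m - 1)) : ℝ) * ((Nat.factorial (b + m - 1)) : ℝ)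
            * ((Nat.factorial (a + b + m - 1)) : ℝ)) :=
  stmt16_general m a b hm
end

section
/- Define Φ(c,d) = (c!/(c+d)!)·∑_{k=1}^c ((c+d−k)!/(c−k)!)·(1/k²) for positive integers c, d. Then for every fixed positive integer d, Φ(c,d) → π²/6 as c → ∞. -/
/-!
Writing `(n)_d` for the falling factorial, `Φ(c, d) = ∑_{k ≤ c} w(c, k) / k²` with
`w(c, k) = (c + d - k)_d / (c + d)_d`. These weights lie in `[0, 1]` and, since both falling
factorials are asymptotic to `c^d`, tend to `1` for each fixed `k`. Tannery's theorem
(dominated convergence for series, with dominating series `∑ 1 / k²`) then gives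
`Φ(c, d) → ζ(2) = π² / 6`.
-/

noncomputable def Phi (c d : ℕ) : ℝ :=
  (((Nat.factorial c) : ℝ) / ((Nat.factorial (c + d)) : ℝ))
    * ∑ k ∈ Finset.Icc 1 c, (((Nat.factorial (c + d - k)) : ℝ) / ((Nat.factorial (c - k)) : ℝ)) * (1 / (k : ℝ) ^ 2)

open Filter Finset Asymptotics Topology
open scoped Nat

theorem tendsto_sum_range_smul_of_tendsto_one {E : Type*} [NormedAddCommGroup E]
    [NormedSpace ℝ E] [CompleteSpace E] {f : ℕ → E} (hf : Summable fun k ↦ ‖f k‖)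
    {w : ℕ → ℕ → ℝ} (hw : ∀ k, Tendsto (w · k) atTop (𝓝 1))
    (hw_le : ∀ n k, k ≤ n → |w n k| ≤ 1) :
    Tendsto (fun n ↦ ∑ k ∈ range (n + 1), w n k • f k) atTop (𝓝 (∑' k, f k)) := by
  simp only [sum_eq_tsum_indicator (fun k ↦ _ • f k)]
  refine tendsto_tsum_of_dominated_convergence hf (fun k ↦ ?_) (.of_forall fun n k ↦ ?_)
  · have hlim : Tendsto (fun n ↦ w n k • f k) atTop (𝓝 (f k)) := by
      simpa using (hw k).smul_const (f k)
    refine hlim.congr' ?_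
    filter_upwards [eventually_ge_atTop k] with n hn
    rw [Set.indicator_of_mem (by simpa [Nat.lt_succ_iff] using hn)]
  · by_cases hk : k ∈ (range (n + 1) : Set ℕ)
    · rw [Set.indicator_of_mem hk, norm_smul, Real.norm_eq_abs]
      exact mul_le_of_le_one_left (norm_nonneg _) (hw_le n k (by simpa [Nat.lt_succ_iff] using hk))
    · rw [Set.indicator_of_notMem hk, norm_zero]
      exact norm_nonneg _

theorem Nat.cast_factorial_div_factorial_sub {K : Type*} [Field K] [CharZero K] {n k : ℕ}
    (h : k ≤ n) : (n ! : K) / (n - k)! = n.descFactorial k := by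
  rw [← Nat.factorial_mul_descFactorial h, Nat.cast_mul]
  exact mul_div_cancel_left₀ _ (mod_cast (n - k).factorial_ne_zero)

theorem isEquivalent_add_descFactorial (j d : ℕ) :
    (fun n : ℕ ↦ ((n + j).descFactorial d : ℝ)) ~[atTop] fun n ↦ (n : ℝ) ^ d := by
  refine ((isEquivalent_descFactorial d).comp_tendsto (tendsto_add_atTop_nat j)).trans ?_
  have hshift : (fun n : ℕ ↦ (n : ℝ) + j) ~[atTop] fun n ↦ (n : ℝ) :=
    (isEquivalent_of_tendsto_one (tendsto_natCast_div_add_atTop (j : ℝ))).symm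
  exact (hshift.pow d).congr_left (.of_forall fun n ↦ by simp)

noncomputable def descFactorialRatio (d c k : ℕ) : ℝ :=
  ((c + d - k).descFactorial d : ℝ) / (c + d).descFactorial d

theorem descFactorialRatio_nonneg (d c k : ℕ) : 0 ≤ descFactorialRatio d c k := by
  unfold descFactorialRatio; positivity

theorem descFactorialRatio_le_one (d c k : ℕ) : descFactorialRatio d c k ≤ 1 :=
  div_le_one_of_le₀ (mod_cast Nat.descFactorial_le d (Nat.sub_le _ _)) (Nat.cast_nonneg _)

theorem tendsto_descFactorialRatio (d k : ℕ) :
    Tendsto (fun c ↦ descFactorialRatio d c k) atTop (𝓝 1) := by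
  rw [← tendsto_add_atTop_iff_nat k]
  have hequiv := (isEquivalent_add_descFactorial d d).trans
    (isEquivalent_add_descFactorial (k + d) d).symm
  have hne : ∀ᶠ n : ℕ in atTop, ((n + (k + d)).descFactorial d : ℝ) ≠ 0 :=
    .of_forall fun n ↦ by simp [Nat.descFactorial_eq_zero_iff_lt]; omega
  refine ((isEquivalent_iff_tendsto_one hne).mp hequiv).congr fun n ↦ ?_
  simp only [descFactorialRatio, Pi.div_apply]
  congr 3 <;> omega

theorem Phi_eq_sum_descFactorialRatio (c d : ℕ) :
    Phi c d = ∑ k ∈ range (c + 1), descFactorialRatio d c k * (1 / (k : ℝ) ^ 2) := by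
  have hc : (c ! : ℝ) / (c + d)! = ((c + d).descFactorial d : ℝ)⁻¹ := by
    rw [← Nat.cast_factorial_div_factorial_sub le_add_self, Nat.add_sub_cancel, inv_div]
  rw [Phi, hc, mul_sum, range_eq_Ico, sum_eq_sum_Ico_succ_bot (Nat.zero_lt_succ c), zero_add,
    Nat.succ_eq_add_one, Ico_add_one_right_eq_Icc]
  -- the extra `k = 0` term vanishes because `1 / 0 = 0`
  rw [Nat.cast_zero, zero_pow two_ne_zero, div_zero, mul_zero, zero_add]
  refine sum_congr rfl fun k hk ↦ ?_
  rw [mem_Icc] at hk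
  have hsub : c + d - k - d = c - k := by omega
  rw [← hsub, Nat.cast_factorial_div_factorial_sub (by omega), descFactorialRatio]
  ring

theorem stmt18_general (d : ℕ) :
    Filter.Tendsto (fun c : ℕ => Phi c d) Filter.atTop
      (nhds (Real.pi ^ 2 / 6)) := by
  rw [← hasSum_zeta_two.tsum_eq]
  simp_rw [Phi_eq_sum_descFactorialRatio, ← smul_eq_mul (a := descFactorialRatio d _ _)]
  refine tendsto_sum_range_smul_of_tendsto_one ?_ (tendsto_descFactorialRatio d) fun n k _ ↦ ?_
  · exact summable_norm_iff.mpr hasSum_zeta_two.summable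
  · exact (abs_of_nonneg (descFactorialRatio_nonneg d n k)).trans_le
      (descFactorialRatio_le_one d n k)

theorem stmt18 (d : ℕ) (hd : 0 < d) :
    Filter.Tendsto (fun c : ℕ => Phi c d) Filter.atTop
      (nhds (Real.pi ^ 2 / 6)) :=
  stmt18_general d
end
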